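/- arXiv:2605.17592 — 9 statements merged into one kernel-verified Lean document; each statement's English description precedes it below -/
import Mathlib

section
/- If in the residual recursion R_n → 0 strongly, then the map V : H → ⊕_{n≥1} K_n, Vh = (B_1 h, B_2 h, ...), where B_n = A_n^{1/2} R_{n-1}^{1/2} and K_n is the closure of the range of B_n, is a well-defined isometry, and V* P_n V = T_n for every n, where P_n is the orthogonal projection onto the n-th summand. -/
open Filter Topology

/-!
Each `Tₙ = √Rₙ Aₙ √Rₙ` factors as `Bₙ* Bₙ`, and the recursion telescopes: `Rₙ₊₁ = Rₙ - Tₙ`,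
so `∑_{n<N} ‖Bₙ h‖² = ⟪h, (1 - R_N) h⟫ → ‖h‖²` by strong convergence of `R_N` to `0`.
Hence `h ↦ (Bₙ h)ₙ` lands in `ℓ²` and preserves norms, and the compressions
`⟪Bₙ g, Bₙ h⟫ = ⟪g, Bₙ* Bₙ h⟫ = ⟪g, Tₙ h⟫` are the `Tₙ`.
-/

section Residual

variable {α : Type*} [CStarAlgebra α] [PartialOrder α] [StarOrderedRing α]

theorem CFC.sqrt_mul_sub_mul_sqrt {r : α} (hr : 0 ≤ r) (a : α) :
    CFC.sqrt r * (1 - a) * CFC.sqrt r = r - CFC.sqrt r * a * CFC.sqrt r := by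
  rw [mul_sub, mul_one, sub_mul, CFC.sqrt_mul_sqrt_self r hr]

theorem CFC.star_sqrt_mul_sqrt_mul_self {a : α} (ha : 0 ≤ a) (r : α) :
    star (CFC.sqrt a * CFC.sqrt r) * (CFC.sqrt a * CFC.sqrt r)
      = CFC.sqrt r * a * CFC.sqrt r := by
  rw [star_mul, (CFC.sqrt_nonneg a).isSelfAdjoint.star_eq,
    (CFC.sqrt_nonneg r).isSelfAdjoint.star_eq, mul_assoc, ← mul_assoc (CFC.sqrt a),
    CFC.sqrt_mul_sqrt_self a ha, mul_assoc]

theorem residual_nonneg {A R : ℕ → α} (hA : ∀ n, A n ≤ 1) (hR0 : R 0 = 1)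
    (hR : ∀ n, R (n + 1) = CFC.sqrt (R n) * (1 - A n) * CFC.sqrt (R n)) (n : ℕ) :
    0 ≤ R n := by
  induction n with
  | zero => exact hR0 ▸ zero_le_one
  | succ n _ =>
    exact hR n ▸ conjugate_nonneg_of_nonneg (sub_nonneg.mpr (hA n)) (CFC.sqrt_nonneg _)

end Residual

theorem sum_range_eq_sub_of_succ_eq_sub {β : Type*} [AddCommGroup β] {R T : ℕ → β}
    (hR : ∀ n, R (n + 1) = R n - T n) (N : ℕ) :
    ∑ n ∈ Finset.range N, T n = R 0 - R N := by
  rw [← Finset.sum_range_sub']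
  exact Finset.sum_congr rfl fun n _ => by rw [hR n, sub_sub_cancel]

section HilbertSpace

variable {𝕜 H : Type*} [RCLike 𝕜] [NormedAddCommGroup H] [InnerProductSpace 𝕜 H]
  [CompleteSpace H]

theorem hasSum_norm_sq_apply_of_tendsto {B R : ℕ → H →L[𝕜] H}
    (hsum : ∀ N, ∑ n ∈ Finset.range N, star (B n) * B n = 1 - R N)
    (hR : ∀ h, Tendsto (fun N => R N h) atTop (𝓝 0)) (h : H) :
    HasSum (fun n => ‖B n h‖ ^ 2) (‖h‖ ^ 2) := by
  rw [hasSum_iff_tendsto_nat_of_nonneg fun n => by positivity]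
  have hpartial : ∀ N, ∑ n ∈ Finset.range N, ‖B n h‖ ^ 2
      = ‖h‖ ^ 2 - RCLike.re (inner 𝕜 h (R N h)) := fun N => by
    simp_rw [ContinuousLinearMap.apply_norm_sq_eq_inner_adjoint_right,
      ← ContinuousLinearMap.star_eq_adjoint, ← ContinuousLinearMap.mul_def, ← map_sum,
      ← inner_sum, ← sum_apply]
    rw [hsum N, sub_apply, one_apply_eq_self, inner_sub_right, map_sub, inner_self_eq_norm_sq]
  have hinner : Tendsto (fun N => RCLike.re (inner 𝕜 h (R N h))) atTop (𝓝 0) := by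
    have : Tendsto (fun N => inner 𝕜 h (R N h)) atTop (𝓝 0) := by
      simpa using tendsto_const_nhds.inner (hR h)
    simpa [Function.comp_def] using (RCLike.continuous_re.tendsto 0).comp this
  simp_rw [hpartial]
  simpa using tendsto_const_nhds.sub hinner

end HilbertSpace

section lp

variable {𝕜 ι E : Type*} {F : ι → Type*} [RCLike 𝕜] [NormedAddCommGroup E] [NormedSpace 𝕜 E]
  [∀ i, NormedAddCommGroup (F i)] [∀ i, NormedSpace 𝕜 (F i)]

def LinearIsometry.lpOfHasSumNormSq (B : ∀ i, E →ₗ[𝕜] F i)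
    (hB : ∀ x, HasSum (fun i => ‖B i x‖ ^ 2) (‖x‖ ^ 2)) : E →ₗᵢ[𝕜] lp F 2 where
  toFun x := ⟨fun i => B i x, memℓp_gen (by simpa using (hB x).summable)⟩
  map_add' x y := lp.ext <| funext fun i => map_add (B i) x y
  map_smul' c x := lp.ext <| funext fun i => map_smul (B i) c x
  norm_map' x := by
    have hnorm (v : lp F 2) : HasSum (fun i => ‖v i‖ ^ 2) (‖v‖ ^ 2) := by
      simpa using lp.hasSum_norm (p := 2) (by norm_num) v
    exact (sq_eq_sq₀ (norm_nonneg _) (norm_nonneg _)).mp ((hnorm _).unique (hB x))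

end lp

theorem residual_naimark_isometry
    {H : Type*} [NormedAddCommGroup H] [InnerProductSpace ℂ H] [CompleteSpace H]
    (A T R : ℕ → H →L[ℂ] H)
    (hA : ∀ n, 0 ≤ A n ∧ A n ≤ 1)
    (hR0 : R 0 = 1)
    (hT : ∀ n, T n = CFC.sqrt (R n) * A n * CFC.sqrt (R n))
    (hR : ∀ n, R (n + 1) = CFC.sqrt (R n) * (1 - A n) * CFC.sqrt (R n))
    (hRlim : ∀ h : H, Tendsto (fun n => R n h) atTop (nhds 0))
    (B : ℕ → H →L[ℂ] H)
    (hB : ∀ n, B n = CFC.sqrt (A n) * CFC.sqrt (R n)) :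
    ∃ V : H →ₗᵢ[ℂ]
        (lp (fun n : ℕ => ((LinearMap.range (B n : H →ₗ[ℂ] H)).topologicalClosure : Submodule ℂ H)) 2),
      (∀ (h : H) (n : ℕ), ((V h : lp _ 2) n : H) = B n h) ∧
      (∀ (n : ℕ) (g h : H),
        (inner ℂ ((V g : lp _ 2) n : H) ((V h : lp _ 2) n : H) : ℂ) = inner ℂ g (T n h)) := by
  have hRnonneg := residual_nonneg (fun n => (hA n).2) hR0 hR
  have hstar : ∀ n, star (B n) * B n = T n := fun n => by
    rw [hB n, hT n, CFC.star_sqrt_mul_sqrt_mul_self (hA n).1]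
  have hsucc : ∀ n, R (n + 1) = R n - T n := fun n => by
    rw [hR n, hT n, CFC.sqrt_mul_sub_mul_sqrt (hRnonneg n)]
  have hsum : ∀ N, ∑ n ∈ Finset.range N, star (B n) * B n = 1 - R N := fun N => by
    simp_rw [hstar, sum_range_eq_sub_of_succ_eq_sub hsucc, hR0]
  have hinner : ∀ n (g h : H), inner ℂ (B n g) (B n h) = inner ℂ g (T n h) := fun n g h => by
    rw [← hstar n, ContinuousLinearMap.star_eq_adjoint, ContinuousLinearMap.mul_def,
      ContinuousLinearMap.comp_apply, ContinuousLinearMap.adjoint_inner_right]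
  let B' n := (B n : H →ₗ[ℂ] H).codRestrict _
    fun h => Submodule.le_topologicalClosure _ (LinearMap.mem_range_self _ h)
  refine ⟨LinearIsometry.lpOfHasSumNormSq B' (hasSum_norm_sq_apply_of_tendsto hsum hRlim),
    fun _ _ => rfl, hinner⟩
end

section
/- Let M be a finite-dimensional subspace of a Hilbert space K, P an orthogonal projection on K with complement Q = I - P, and C the compression of P to M. Then dim(QM / (M ∩ QK)) = rank(C - C^2), where QM is the image of M under Q. -/
/-!
For `m ∈ M`, `C m` and `m - C m` are the orthogonal projections onto `M` of `P m` and `Q m`.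
Since `⟪m, P m⟫ = ‖P m‖²`, the projection of `P m` onto `M` vanishes only if `P m = 0`, so
`ker C = M ∩ ker P = M ∩ QK` and likewise `ker (1 - C) = M ∩ ker Q`. As `X` and `1 - X` are
coprime, `ker (C - C²) = ker C ⊕ ker (1 - C)`, and rank–nullity for `C - C²` and for `Q`
restricted to `M` gives the formula.
-/

open scoped InnerProductSpace
open LinearMap (ker range)

namespace Module.End

section Ring

variable {R V : Type*} [Ring R] [AddCommGroup V] [Module R V] (f : Module.End R V)

theorem ker_sub_mul_self_eq_sup : ker (f - f * f) = ker f ⊔ ker (1 - f) := by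
  refine le_antisymm (fun v hv => ?_) (sup_le (fun v hv => ?_) fun v hv => ?_)
  · have hv : f v - f (f v) = 0 := hv
    refine Submodule.mem_sup.mpr ⟨v - f v, ?_, f v, ?_, sub_add_cancel v (f v)⟩
    · rwa [LinearMap.mem_ker, map_sub]
    · exact hv
  · have hv : f v = 0 := hv
    show f v - f (f v) = 0
    rw [hv, map_zero, sub_zero]
  · have hv : v - f v = 0 := hv
    have hfv : f v = v := (sub_eq_zero.mp hv).symm
    show f v - f (f v) = 0
    rw [hfv, hfv, sub_self]

theorem disjoint_ker_ker_one_sub : Disjoint (ker f) (ker (1 - f)) := by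
  refine Submodule.disjoint_def.mpr fun v h₀ h₁ => ?_
  have h₁ : v - f v = 0 := h₁
  rwa [LinearMap.mem_ker.mp h₀, sub_zero] at h₁

end Ring

theorem finrank_range_sub_mul_self_add_finrank_ker_add_finrank_ker_one_sub {R V : Type*}
    [DivisionRing R] [AddCommGroup V] [Module R V] [FiniteDimensional R V] (f : Module.End R V) :
    Module.finrank R (range (f - f * f)) +
      (Module.finrank R (ker f) + Module.finrank R (ker (1 - f))) = Module.finrank R V := by
  rw [← Submodule.finrank_sup_add_finrank_inf_eq, (disjoint_ker_ker_one_sub f).eq_bot,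
    finrank_bot, add_zero, ← ker_sub_mul_self_eq_sup]
  exact LinearMap.finrank_range_add_finrank_ker _

end Module.End

namespace Submodule

variable {R V W : Type*} [DivisionRing R] [AddCommGroup V] [Module R V] [AddCommGroup W]
  [Module R W]

theorem finrank_map_add_finrank_comap_ker (M : Submodule R V) [FiniteDimensional R M]
    (f : V →ₗ[R] W) :
    Module.finrank R (M.map f) + Module.finrank R ((ker f).comap M.subtype) =
      Module.finrank R M := by
  have := LinearMap.finrank_range_add_finrank_ker (f ∘ₗ M.subtype)
  rwa [LinearMap.range_comp, range_subtype, LinearMap.ker_comp] at this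

theorem finrank_inf_eq_finrank_comap_subtype (M N : Submodule R V) :
    Module.finrank R ↥(M ⊓ N) = Module.finrank R (N.comap M.subtype) := by
  rw [← map_comap_subtype, finrank_map_subtype_eq]

end Submodule

section InnerProductSpace

variable {𝕜 E : Type*} [RCLike 𝕜] [NormedAddCommGroup E] [InnerProductSpace 𝕜 E]

theorem IsStarProjection.apply_eq_zero_of_inner_eq_zero [CompleteSpace E] {p : E →L[𝕜] E}
    (hp : IsStarProjection p) {x : E} (h : ⟪x, p x⟫_𝕜 = 0) : p x = 0 := by
  have hpp : p (p x) = p x := congr($hp.isIdempotentElem x)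
  have hsym : ∀ a b, ⟪p a, b⟫_𝕜 = ⟪a, p b⟫_𝕜 := hp.isSelfAdjoint.isSymmetric
  rw [← inner_self_eq_zero (𝕜 := 𝕜), hsym, hpp, h]

namespace Submodule

variable (K : Submodule 𝕜 E) [K.HasOrthogonalProjection]

noncomputable def compression (T : E →L[𝕜] E) : K →L[𝕜] K :=
  K.orthogonalProjectionOnto ∘L T ∘L K.subtypeL

theorem compression_apply (T : E →L[𝕜] E) (x : K) :
    K.compression T x = K.orthogonalProjectionOnto (T x) := rfl

theorem compression_one_sub (T : E →L[𝕜] E) : K.compression (1 - T) = 1 - K.compression T := by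
  ext x
  simp [compression_apply]

theorem ker_compression [CompleteSpace E] {p : E →L[𝕜] E} (hp : IsStarProjection p) :
    ker (K.compression p : K →ₗ[𝕜] K) = (ker (p : E →ₗ[𝕜] E)).comap K.subtype := by
  ext x
  simp only [LinearMap.mem_ker, mem_comap, subtype_apply, ContinuousLinearMap.coe_coe]
  refine ⟨fun h => hp.apply_eq_zero_of_inner_eq_zero ?_, fun h => by simp [compression_apply, h]⟩
  rw [← inner_orthogonalProjectionOnto_eq_of_mem_left, ← compression_apply, h, inner_zero_right]

end Submodule

end InnerProductSpace

theorem compression_rank_formula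
    {K : Type*} [NormedAddCommGroup K] [InnerProductSpace ℂ K] [CompleteSpace K]
    (M : Submodule ℂ K) [FiniteDimensional ℂ M]
    (P : K →L[ℂ] K) (hP : IsIdempotentElem P) (hPsa : IsSelfAdjoint P)
    (Q : K →L[ℂ] K) (hQ : Q = 1 - P)
    (C : M →L[ℂ] M) (hC : C = M.orthogonalProjectionOnto ∘L P ∘L M.subtypeL) :
    Module.finrank ℂ ↥(M.map (Q : K →ₗ[ℂ] K)) - Module.finrank ℂ ↥(M ⊓ LinearMap.range (Q : K →ₗ[ℂ] K)) =
      Module.finrank ℂ (LinearMap.range ((C - C * C : M →L[ℂ] M) : M →ₗ[ℂ] M)) := by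
  subst hQ hC
  have hPproj : IsStarProjection P := ⟨hP, hPsa⟩
  have hrange : range ((1 - P : K →L[ℂ] K) : K →ₗ[ℂ] K) = ker (P : K →ₗ[ℂ] K) := by
    rw [LinearMap.IsIdempotentElem.range_eq_ker_one_sub
      (ContinuousLinearMap.IsIdempotentElem.toLinearMap hP.one_sub)]
    simp
  have hrank_Q := M.finrank_map_add_finrank_comap_ker ((1 - P : K →L[ℂ] K) : K →ₗ[ℂ] K)
  rw [← M.ker_compression hPproj.one_sub, M.compression_one_sub] at hrank_Q
  have hrank_C := Module.End.finrank_range_sub_mul_self_add_finrank_ker_add_finrank_ker_one_sub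
    (M.compression P : M →ₗ[ℂ] M)
  rw [hrange, Submodule.finrank_inf_eq_finrank_comap_subtype, ← M.ker_compression hPproj]
  set f : Module.End ℂ M := (M.compression P : M →ₗ[ℂ] M)
  change _ = Module.finrank ℂ (range (f - f * f))
  change _ + Module.finrank ℂ (ker (1 - f : Module.End ℂ M)) = _ at hrank_Q
  omega
end

section
/- For an ordered POVM (A_1, A_2, ...), the m-th iterate of the residual transform satisfies A_2^{(m)} = (I - A_1)^{m/2} A_2 (I - A_1)^{m/2}, and consequently A_2^{(m)} converges strongly to P A_2 P where P is the orthogonal projection onto ker A_1. -/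
/-!
Write `S = (I - A₁)^{1/2}`. The recursion is conjugation by `S`, which gives the closed formula.
Since `0 ≤ A₁ ≤ I`, `S` is a positive contraction, and `‖S^m (I - S)‖ ≤ sup_{[0,1]} t^m (1 - t)
≤ 1/(m+1)`. Hence `S^m → 0` strongly on `closure (range (I - S)) = (ker (I - S))ᗮ`, while `S^m`
fixes `ker (I - S) = ker A₁` (as `I + S` is invertible): `S^m → P` strongly. The uniform bound
`‖S^m‖ ≤ 1` turns this into `S^m A₂ S^m → P A₂ P`.
-/

open Filter Topology

theorem eq_pow_mul_mul_pow_of_succ {M : Type*} [Monoid M] {s : M} {x : ℕ → M}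
    (hx : ∀ m, x (m + 1) = s * x m * s) (m : ℕ) : x m = s ^ m * x 0 * s ^ m := by
  induction m with
  | zero => simp
  | succ m ih =>
    rw [hx, ih]
    nth_rw 1 [pow_succ']
    rw [pow_succ]
    simp only [mul_assoc]

theorem pow_mul_one_sub_le_one_div {t : ℝ} (h0 : 0 ≤ t) (h1 : t ≤ 1) (m : ℕ) :
    t ^ m * (1 - t) ≤ 1 / (m + 1) := by
  rw [le_div_iff₀ (by positivity)]
  have hmono : ∀ i ∈ Finset.range (m + 1), t ^ m ≤ t ^ i := fun i hi =>
    pow_le_pow_of_le_one h0 h1 (Nat.lt_succ_iff.mp (Finset.mem_range.mp hi))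
  calc t ^ m * (1 - t) * (m + 1) = (∑ _i ∈ Finset.range (m + 1), t ^ m) * (1 - t) := by
        simp only [Finset.sum_const, Finset.card_range, nsmul_eq_mul]; push_cast; ring
    _ ≤ (∑ i ∈ Finset.range (m + 1), t ^ i) * (1 - t) :=
        mul_le_mul_of_nonneg_right (Finset.sum_le_sum hmono) (sub_nonneg.mpr h1)
    _ = 1 - t ^ (m + 1) := geom_sum_mul_neg t (m + 1)
    _ ≤ 1 := sub_le_self _ (pow_nonneg h0 _)

section CStarAlgebra

variable {A : Type*} [CStarAlgebra A] [PartialOrder A] [StarOrderedRing A]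

theorem spectrum_subset_Icc_of_nonneg_of_le_one {a : A} (h0 : 0 ≤ a) (h1 : a ≤ 1) :
    spectrum ℝ a ⊆ Set.Icc 0 1 := fun t ht =>
  ⟨spectrum_nonneg_of_nonneg h0 ht, (CFC.le_one_iff a).mp h1 t ht⟩

theorem norm_pow_le_one_of_nonneg_of_le_one {a : A} (h0 : 0 ≤ a) (h1 : a ≤ 1) (m : ℕ) :
    ‖a ^ m‖ ≤ 1 := by
  rw [← cfc_pow_id (R := ℝ) a m]
  refine norm_cfc_le zero_le_one fun t ht => ?_
  obtain ⟨ht0, ht1⟩ := spectrum_subset_Icc_of_nonneg_of_le_one h0 h1 ht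
  rw [Real.norm_of_nonneg (pow_nonneg ht0 m)]
  exact pow_le_one₀ ht0 ht1

theorem norm_pow_mul_one_sub_le {a : A} (h0 : 0 ≤ a) (h1 : a ≤ 1) (m : ℕ) :
    ‖a ^ m * (1 - a)‖ ≤ 1 / (m + 1) := by
  have hcfc : a ^ m * (1 - a) = cfc (fun t : ℝ => t ^ m * (1 - t)) a := by
    rw [cfc_mul (fun t : ℝ => t ^ m) (fun t : ℝ => 1 - t) a, cfc_pow_id (R := ℝ) a m,
      cfc_sub (fun _ : ℝ => (1 : ℝ)) (fun t : ℝ => t) a, cfc_const_one ℝ a, cfc_id' ℝ a]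
  rw [hcfc]
  refine norm_cfc_le (by positivity) fun t ht => ?_
  obtain ⟨ht0, ht1⟩ := spectrum_subset_Icc_of_nonneg_of_le_one h0 h1 ht
  rw [Real.norm_of_nonneg (mul_nonneg (pow_nonneg ht0 m) (sub_nonneg.mpr ht1))]
  exact pow_mul_one_sub_le_one_div ht0 ht1 m

end CStarAlgebra

theorem tendsto_apply_of_tendsto_of_norm_le {ι 𝕜 E F : Type*} [NontriviallyNormedField 𝕜]
    [SeminormedAddCommGroup E] [SeminormedAddCommGroup F] [NormedSpace 𝕜 E] [NormedSpace 𝕜 F]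
    {l : Filter ι} {T : ι → E →L[𝕜] F} {C : ℝ} (hC : ∀ i, ‖T i‖ ≤ C)
    {x : ι → E} {x₀ : E} {y : F} (hT : Tendsto (fun i => T i x₀) l (𝓝 y))
    (hx : Tendsto x l (𝓝 x₀)) : Tendsto (fun i => T i (x i)) l (𝓝 y) := by
  have hdiff : Tendsto (fun i => T i (x i - x₀)) l (𝓝 0) := by
    refine squeeze_zero_norm (fun i => ((T i).le_opNorm _).trans
      (mul_le_mul_of_nonneg_right (hC i) (norm_nonneg _))) ?_
    simpa using (tendsto_iff_norm_sub_tendsto_zero.mp hx).const_mul C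
  simpa using hdiff.add hT

namespace ContinuousLinearMap

theorem pow_apply_eq_self_of_apply_eq_self {R M : Type*} [Semiring R] [TopologicalSpace M]
    [AddCommMonoid M] [Module R M] {S : M →L[R] M} {x : M} (hx : S x = x) (m : ℕ) :
    (S ^ m) x = x := by
  induction m with
  | zero => rfl
  | succ m ih => rw [pow_succ, mul_apply_eq_comp, hx, ih]

variable {𝕜 E : Type*} [RCLike 𝕜] [NormedAddCommGroup E] [InnerProductSpace 𝕜 E]

open scoped ComplexOrder in
theorem le_one_of_hasSum_apply {ι : Type*} {A : ι → E →L[𝕜] E} (hA : ∀ n, 0 ≤ A n)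
    (hsum : ∀ x, HasSum (fun n => A n x) x) (k : ι) : A k ≤ 1 := by
  have hpos n : (A n).IsPositive := (nonneg_iff_isPositive _).mp (hA n)
  have hsymm : (1 - A k).IsSymmetric :=
    LinearMap.IsSymmetric.sub (fun _ _ => rfl) (hpos k).isSymmetric
  refine (isPositive_iff _).mpr ⟨hsymm, fun x => ?_⟩
  have hinner : HasSum (fun n => inner 𝕜 x (A n x)) (inner 𝕜 x x) :=
    (hsum x).mapL (innerSL 𝕜 x)
  have hsymm_x := hsymm x x
  simp only [coe_coe] at hsymm_x
  rw [hsymm_x, sub_apply, one_apply_eq_self, inner_sub_right, sub_nonneg]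
  exact le_hasSum hinner k fun n _ => (hpos n).inner_nonneg_right x

variable {H : Type*} [NormedAddCommGroup H] [InnerProductSpace ℂ H] [CompleteSpace H]
  {S : H →L[ℂ] H}

theorem tendsto_pow_apply_zero_of_mem_orthogonal_ker_one_sub (hS0 : 0 ≤ S) (hS1 : S ≤ 1)
    {x : H} (hx : x ∈ (LinearMap.ker ((1 - S : H →L[ℂ] H) : H →ₗ[ℂ] H))ᗮ) :
    Tendsto (fun m => (S ^ m) x) atTop (𝓝 0) := by
  have hsa : IsSelfAdjoint (1 - S) := (IsSelfAdjoint.one _).sub (IsSelfAdjoint.of_nonneg hS0)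
  rw [orthogonal_ker, hsa.adjoint_eq, ← SetLike.mem_coe, Submodule.topologicalClosure_coe] at hx
  have hequi : Equicontinuous fun m => ⇑(S ^ m) :=
    ((NormedSpace.equicontinuous_TFAE fun m => S ^ m).out 5 1).mp
      (⟨1, norm_pow_le_one_of_nonneg_of_le_one hS0 hS1⟩ : ∃ C, ∀ m, ‖S ^ m‖ ≤ C)
  -- the vectors along which `S ^ m → 0` form a closed set containing `range (1 - S)`
  refine (hequi.isClosed_setOfPred_tendsto continuous_const).closure_subset_iff.mpr ?_ hx
  rintro _ ⟨y, rfl⟩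
  refine squeeze_zero_norm (a := fun m : ℕ => 1 / ((m : ℝ) + 1) * ‖y‖) (fun m => ?_) ?_
  · rw [coe_coe, ← mul_apply_eq_comp]
    exact ((S ^ m * (1 - S)).le_opNorm y).trans
      (mul_le_mul_of_nonneg_right (norm_pow_mul_one_sub_le hS0 hS1 m) (norm_nonneg y))
  · simpa using tendsto_one_div_add_atTop_nhds_zero_nat.mul_const ‖y‖

theorem tendsto_pow_apply_of_range_eq_ker_one_sub (hS0 : 0 ≤ S) (hS1 : S ≤ 1)
    {P : H →L[ℂ] H} (hPidem : IsIdempotentElem P) (hPsa : IsSelfAdjoint P)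
    (hPrange : LinearMap.range (P : H →ₗ[ℂ] H) =
      LinearMap.ker ((1 - S : H →L[ℂ] H) : H →ₗ[ℂ] H)) (x : H) :
    Tendsto (fun m => (S ^ m) x) atTop (𝓝 (P x)) := by
  have hfix : S (P x) = P x := by
    have : P x ∈ LinearMap.ker ((1 - S : H →L[ℂ] H) : H →ₗ[ℂ] H) :=
      hPrange ▸ LinearMap.mem_range_self _ x
    rw [LinearMap.mem_ker, coe_coe, sub_apply, one_apply_eq_self, sub_eq_zero] at this
    exact this.symm
  have hcompl : x - P x ∈ (LinearMap.ker ((1 - S : H →L[ℂ] H) : H →ₗ[ℂ] H))ᗮ := by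
    rw [← hPrange, (isSelfAdjoint_iff_isSymmetric.mp hPsa).orthogonal_range]
    simpa [sub_eq_zero] using congr($hPidem x).symm
  have hsplit m : (S ^ m) x = P x + (S ^ m) (x - P x) := by
    rw [map_sub, pow_apply_eq_self_of_apply_eq_self hfix, add_sub_cancel]
  simpa only [hsplit, add_zero] using
    (tendsto_pow_apply_zero_of_mem_orthogonal_ker_one_sub hS0 hS1 hcompl).const_add (P x)

theorem ker_one_sub_mul_self_of_nonneg (hS0 : 0 ≤ S) :
    LinearMap.ker ((1 - S * S : H →L[ℂ] H) : H →ₗ[ℂ] H) =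
      LinearMap.ker ((1 - S : H →L[ℂ] H) : H →ₗ[ℂ] H) := by
  have hunit : IsUnit (1 + S) := (isStrictlyPositive_one.add_nonneg hS0).isUnit
  have hfactor : 1 - S * S = (1 + S) * (1 - S) := by noncomm_ring
  rw [hfactor, mul_def, toLinearMap_comp, LinearMap.ker_comp_of_ker_eq_bot _
    (LinearMap.ker_eq_bot_of_injective (isUnit_iff_bijective.mp hunit).injective)]

end ContinuousLinearMap

theorem second_coordinate_iteration
    {H : Type*} [NormedAddCommGroup H] [InnerProductSpace ℂ H] [CompleteSpace H]
    (A : ℕ → H →L[ℂ] H)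
    (hApos : ∀ n, 0 ≤ A n)
    (hAsum : ∀ h : H, HasSum (fun n => A n h) h)
    (X : ℕ → H →L[ℂ] H)
    (hX0 : X 0 = A 1)
    (hXrec : ∀ m, X (m + 1) = CFC.sqrt (1 - A 0) * X m * CFC.sqrt (1 - A 0))
    (P : H →L[ℂ] H) (hPidem : IsIdempotentElem P) (hPsa : IsSelfAdjoint P)
    (hPrange : LinearMap.range (P : H →ₗ[ℂ] H) = LinearMap.ker (A 0 : H →ₗ[ℂ] H)) :
    (∀ m, X m = (CFC.sqrt (1 - A 0)) ^ m * A 1 * (CFC.sqrt (1 - A 0)) ^ m) ∧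
    (∀ h : H, Tendsto (fun m => X m h) atTop (nhds (P (A 1 (P h))))) := by
  set S := CFC.sqrt (1 - A 0)
  have hformula m : X m = S ^ m * A 1 * S ^ m := hX0 ▸ eq_pow_mul_mul_pow_of_succ hXrec m
  have hA0_le : A 0 ≤ 1 := ContinuousLinearMap.le_one_of_hasSum_apply hApos hAsum 0
  have hS0 : 0 ≤ S := CFC.sqrt_nonneg _
  have hS1 : S ≤ 1 :=
    CFC.sqrt_one (A := H →L[ℂ] H) ▸ CFC.sqrt_le_sqrt _ _ (sub_le_self _ (hApos 0))
  have hA0 : A 0 = 1 - S * S := by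
    rw [CFC.sqrt_mul_sqrt_self _ (sub_nonneg.mpr hA0_le), sub_sub_cancel]
  have hS_pow : ∀ x, Tendsto (fun m => (S ^ m) x) atTop (𝓝 (P x)) :=
    ContinuousLinearMap.tendsto_pow_apply_of_range_eq_ker_one_sub hS0 hS1 hPidem hPsa
      (hPrange.trans (hA0 ▸ ContinuousLinearMap.ker_one_sub_mul_self_of_nonneg hS0))
  refine ⟨hformula, fun h => ?_⟩
  simp only [hformula, mul_apply_eq_comp]
  exact tendsto_apply_of_tendsto_of_norm_le (norm_pow_le_one_of_nonneg_of_le_one hS0 hS1)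
    (hS_pow _) (((A 1).continuous.tendsto _).comp (hS_pow h))
end

section
/- Let (A_n) be an ordered POVM and set B_k = P_{k-1} A_k P_{k-1} where P_{k-1} is the orthogonal projection onto ∩_{j<k} ker A_j. Then the operators B_k are pairwise orthogonal: B_i B_j = 0 for i ≠ j. -/
/-! For `i < j` the range of `P j` lies in the range of `P i` and in `ker A i`, so
`P i * P j = P j` and `A i * P j = 0`, which kills `B i * B j`. All `B k` are self-adjoint,
so the case `i > j` follows by taking adjoints. -/

theorem mul_conj_eq_zero_of_mul_eq_right {R : Type*} [SemigroupWithZero R] {p a q b : R}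
    (hpq : p * q = q) (haq : a * q = 0) : p * a * p * (q * b * q) = 0 := by
  calc p * a * p * (q * b * q) = p * (a * (p * q)) * b * q := by simp only [mul_assoc]
    _ = 0 := by rw [hpq, haq, mul_zero, zero_mul, zero_mul]

namespace ContinuousLinearMap

variable {R M : Type*} [Semiring R] [TopologicalSpace M] [AddCommMonoid M] [Module R M]

theorem mul_eq_right_of_range_le {p q : M →L[R] M} (hp : IsIdempotentElem p)
    (h : LinearMap.range (q : M →ₗ[R] M) ≤ LinearMap.range (p : M →ₗ[R] M)) : p * q = q :=
  coe_inj.mp ((LinearMap.IsIdempotentElem.comp_eq_right_iff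
    (isIdempotentElem_toLinearMap_iff.mpr hp) _).mpr h)

theorem mul_eq_zero_of_range_le_ker {a q : M →L[R] M}
    (h : LinearMap.range (q : M →ₗ[R] M) ≤ LinearMap.ker (a : M →ₗ[R] M)) : a * q = 0 :=
  coe_inj.mp (LinearMap.range_le_ker_iff.mp h)

end ContinuousLinearMap

open ContinuousLinearMap in
theorem collapse_coordinates_pairwise_orthogonal_general
    {H : Type*} [NormedAddCommGroup H] [InnerProductSpace ℂ H] [CompleteSpace H]
    (A : ℕ → H →L[ℂ] H)
    (hApos : ∀ n, 0 ≤ A n)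
    (P : ℕ → H →L[ℂ] H)
    (hPidem : ∀ k, IsIdempotentElem (P k))
    (hPsa : ∀ k, IsSelfAdjoint (P k))
    (hPrange : ∀ k, LinearMap.range (P k : H →ₗ[ℂ] H) = ⨅ j ∈ Finset.range k, LinearMap.ker (A j : H →ₗ[ℂ] H))
    (B : ℕ → H →L[ℂ] H)
    (hB : ∀ k, B k = P k * A k * P k) :
    ∀ i j, i ≠ j → B i * B j = 0 := by
  have hBsa : ∀ k, IsSelfAdjoint (B k) := fun k => by
    simpa only [hB k, (hPsa k).star_eq] using (IsSelfAdjoint.of_nonneg (hApos k)).conjugate' (P k)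
  have hlt : ∀ i j, i < j → B i * B j = 0 := fun i j hij => by
    rw [hB, hB]
    refine mul_conj_eq_zero_of_mul_eq_right ?_ ?_
    · refine mul_eq_right_of_range_le (hPidem i) ?_
      rw [hPrange, hPrange]
      exact biInf_mono fun m hm => Finset.range_mono hij.le hm
    · refine mul_eq_zero_of_range_le_ker ?_
      rw [hPrange]
      exact iInf₂_le i (Finset.mem_range.mpr hij)
  intro i j hij
  rcases hij.lt_or_gt with h | h
  · exact hlt i j h
  · simpa only [star_mul, (hBsa i).star_eq, (hBsa j).star_eq, star_zero] using
      congrArg star (hlt j i h)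

theorem collapse_coordinates_pairwise_orthogonal
    {H : Type*} [NormedAddCommGroup H] [InnerProductSpace ℂ H] [CompleteSpace H]
    (A : ℕ → H →L[ℂ] H)
    (hApos : ∀ n, 0 ≤ A n)
    (hAsum : ∀ h : H, HasSum (fun n => A n h) h)
    (P : ℕ → H →L[ℂ] H)
    (hPidem : ∀ k, IsIdempotentElem (P k))
    (hPsa : ∀ k, IsSelfAdjoint (P k))
    (hPrange : ∀ k, LinearMap.range (P k : H →ₗ[ℂ] H) = ⨅ j ∈ Finset.range k, LinearMap.ker (A j : H →ₗ[ℂ] H))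
    (B : ℕ → H →L[ℂ] H)
    (hB : ∀ k, B k = P k * A k * P k) :
    ∀ i j, i ≠ j → B i * B j = 0 :=
  collapse_coordinates_pairwise_orthogonal_general A hApos P hPidem hPsa hPrange B hB
end

section
/- With B_k = P_{k-1} A_k P_{k-1} as in the collapse of an ordered POVM and B_esc = I - Σ_{k≥1} B_k (strong sum), each B_i commutes with B_esc and B_i B_esc = B_esc B_i = B_i - B_i^2. In particular the collapsed family (B_1, B_2, ..., B_esc) is commutative. -/
/-! The `B k` are pairwise orthogonal: for `i < j` the range of `B j` lies in the range of `P j`,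
which is fixed by `P i` and killed by `A i`, so `B i * B j = 0`, and self-adjointness gives
`B j * B i = 0`. Multiplying the strong sum `S = Σ B k` by `B i` on either side therefore leaves
only the diagonal term, `B i * S = S * B i = B i * B i`, and `Besc = 1 - S` does the rest. -/

open LinearMap

namespace ContinuousLinearMap

variable {R M : Type*} [Semiring R] [TopologicalSpace M] [AddCommMonoid M] [Module R M]

theorem mul_mul_mul_eq_zero_of_range_le {p a x : M →L[R] M} (hp : IsIdempotentElem p)
    (hxp : range (x : M →ₗ[R] M) ≤ range (p : M →ₗ[R] M))
    (hxa : range (x : M →ₗ[R] M) ≤ ker (a : M →ₗ[R] M)) :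
    p * a * p * x = 0 := by
  have hpx : p * x = x := by
    ext v
    exact congr($((LinearMap.IsIdempotentElem.comp_eq_right_iff (IsIdempotentElem.toLinearMap hp) _).mpr hxp) v)
  have hax : a * x = 0 := by
    ext v
    exact congr($(range_le_ker_iff.mp hxa) v)
  rw [mul_assoc, hpx, mul_assoc, hax, mul_zero]

theorem collapse_mul_eq_zero_of_lt {A P : ℕ → M →L[R] M} (hP : ∀ k, IsIdempotentElem (P k))
    (hPrange : ∀ k, range (P k : M →ₗ[R] M) = ⨅ j ∈ Finset.range k, ker (A j : M →ₗ[R] M))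
    {i j : ℕ} (hij : i < j) :
    P i * A i * P i * (P j * A j * P j) = 0 := by
  have hBj : range ((P j * A j * P j : M →L[R] M) : M →ₗ[R] M) ≤ range (P j : M →ₗ[R] M) :=
    range_comp_le_range ((A j * P j : M →L[R] M) : M →ₗ[R] M) _
  refine mul_mul_mul_eq_zero_of_range_le (hP i) (hBj.trans ?_) (hBj.trans ?_)
  · rw [hPrange, hPrange]
    exact biInf_mono fun l hl => Finset.range_subset_range.mpr hij.le hl
  · rw [hPrange]
    exact iInf₂_le i (Finset.mem_range.mpr hij)

variable [T2Space M] {ι : Type*} {B : ι → M →L[R] M} {S : M →L[R] M}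

theorem mul_hasSum_eq_mul_self (hS : ∀ v, HasSum (fun k => B k v) (S v))
    (hB : Pairwise fun i j => B i * B j = 0) (i : ι) : B i * S = B i * B i := by
  ext v
  refine ((hS v).mapL (B i)).unique (hasSum_single i fun k hk => ?_)
  exact congr($(hB hk.symm) v)

theorem hasSum_mul_eq_mul_self (hS : ∀ v, HasSum (fun k => B k v) (S v))
    (hB : Pairwise fun i j => B i * B j = 0) (i : ι) : S * B i = B i * B i := by
  ext v
  refine (hS (B i v)).unique (hasSum_single i fun k hk => ?_)
  exact congr($(hB hk) v)

end ContinuousLinearMap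

theorem pairwise_mul_eq_zero_of_forall_lt {R ι : Type*} [NonUnitalNonAssocRing R] [StarRing R]
    [LinearOrder ι] {B : ι → R} (hB : ∀ i, IsSelfAdjoint (B i))
    (h : ∀ i j, i < j → B i * B j = 0) : Pairwise fun i j => B i * B j = 0 := by
  intro i j hij
  rcases hij.lt_or_gt with hlt | hgt
  · exact h i j hlt
  · rw [((hB j).commute_of_mul_eq_zero (hB i) (h j i hgt)).symm.eq, h j i hgt]

open ContinuousLinearMap in
theorem collapse_escape_commutation_general
    {H : Type*} [NormedAddCommGroup H] [InnerProductSpace ℂ H] [CompleteSpace H]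
    (A : ℕ → H →L[ℂ] H)
    (hApos : ∀ n, 0 ≤ A n)
    (P : ℕ → H →L[ℂ] H)
    (hPidem : ∀ k, IsIdempotentElem (P k))
    (hPsa : ∀ k, IsSelfAdjoint (P k))
    (hPrange : ∀ k, LinearMap.range (P k : H →ₗ[ℂ] H) = ⨅ j ∈ Finset.range k, LinearMap.ker (A j : H →ₗ[ℂ] H))
    (B : ℕ → H →L[ℂ] H)
    (hB : ∀ k, B k = P k * A k * P k)
    (S Besc : H →L[ℂ] H)
    (hS : ∀ h : H, HasSum (fun k => B k h) (S h))
    (hBesc : Besc = 1 - S) :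
    (∀ i, B i * Besc = Besc * B i ∧ B i * Besc = B i - B i * B i) ∧
    (∀ i j, B i * B j = B j * B i) := by
  have hBsa : ∀ k, IsSelfAdjoint (B k) := fun k => by
    simpa only [hB, (hPsa k).star_eq] using (hApos k).isSelfAdjoint.conjugate' (P k)
  have hBorth : Pairwise fun i j => B i * B j = 0 :=
    pairwise_mul_eq_zero_of_forall_lt hBsa fun i j hij => by
      rw [hB, hB]
      exact collapse_mul_eq_zero_of_lt hPidem hPrange hij
  refine ⟨fun i => ?_, fun i j => ?_⟩
  · rw [hBesc, mul_sub, sub_mul, mul_one, one_mul, mul_hasSum_eq_mul_self hS hBorth,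
      hasSum_mul_eq_mul_self hS hBorth]
    exact ⟨rfl, rfl⟩
  · rcases eq_or_ne i j with rfl | hij
    · rfl
    · rw [hBorth hij, hBorth hij.symm]

theorem collapse_escape_commutation
    {H : Type*} [NormedAddCommGroup H] [InnerProductSpace ℂ H] [CompleteSpace H]
    (A : ℕ → H →L[ℂ] H)
    (hApos : ∀ n, 0 ≤ A n)
    (hAsum : ∀ h : H, HasSum (fun n => A n h) h)
    (P : ℕ → H →L[ℂ] H)
    (hPidem : ∀ k, IsIdempotentElem (P k))
    (hPsa : ∀ k, IsSelfAdjoint (P k))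
    (hPrange : ∀ k, LinearMap.range (P k : H →ₗ[ℂ] H) = ⨅ j ∈ Finset.range k, LinearMap.ker (A j : H →ₗ[ℂ] H))
    (B : ℕ → H →L[ℂ] H)
    (hB : ∀ k, B k = P k * A k * P k)
    (S Besc : H →L[ℂ] H)
    (hS : ∀ h : H, HasSum (fun k => B k h) (S h))
    (hBesc : Besc = 1 - S) :
    (∀ i, B i * Besc = Besc * B i ∧ B i * Besc = B i - B i * B i) ∧
    (∀ i j, B i * B j = B j * B i) :=
  collapse_escape_commutation_general A hApos P hPidem hPsa hPrange B hB S Besc hS hBesc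
end

section
/- Range of the collapse map (necessity): if (A_n) is an ordered POVM with collapse coordinates B_k = P_{k-1} A_k P_{k-1}, then ∩_{k≥1} ker B_k = {0}; that is, if B_k x = 0 for every k then x = 0. -/
open scoped InnerProductSpace

/-!
If `A j x = 0` for all `j < k`, then `x` lies in the range of the orthogonal projection `P k`, so
`⟪x, A k x⟫ = ⟪P k x, A k (P k x)⟫ = ⟪x, B k x⟫ = 0`, and positivity of `A k` forces `A k x = 0`.
By strong induction every `A k` kills `x`, hence `x = ∑ A k x = 0`.
-/

namespace ContinuousLinearMap

variable {H : Type*} [NormedAddCommGroup H] [InnerProductSpace ℂ H] [CompleteSpace H]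

lemma apply_eq_zero_of_nonneg_of_inner_apply_eq_zero {T : H →L[ℂ] H} (hT : 0 ≤ T) {x : H}
    (hx : ⟪x, T x⟫_ℂ = 0) : T x = 0 := by
  obtain ⟨S, rfl⟩ := CStarAlgebra.nonneg_iff_eq_star_mul_self.mp hT
  have hSx : S x = 0 := by
    rw [← norm_eq_zero, ← sq_eq_zero_iff, apply_norm_sq_eq_inner_adjoint_right, ← star_eq_adjoint]
    exact congrArg RCLike.re hx
  change star S (S x) = 0
  rw [hSx, map_zero]

lemma apply_eq_zero_of_conj_apply_eq_zero {A P : H →L[ℂ] H} (hA : 0 ≤ A) (hP : IsSelfAdjoint P)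
    {x : H} (hPx : P x = x) (hx : (P * A * P) x = 0) : A x = 0 := by
  change P (A (P x)) = 0 at hx
  rw [hPx] at hx
  refine apply_eq_zero_of_nonneg_of_inner_apply_eq_zero hA ?_
  calc ⟪x, A x⟫_ℂ = ⟪P x, A x⟫_ℂ := by rw [hPx]
    _ = ⟪x, P (A x)⟫_ℂ := hP.isSymmetric x (A x)
    _ = 0 := by rw [hx, inner_zero_right]

end ContinuousLinearMap

theorem collapse_coordinates_trivial_common_kernel
    {H : Type*} [NormedAddCommGroup H] [InnerProductSpace ℂ H] [CompleteSpace H]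
    (A : ℕ → H →L[ℂ] H)
    (hApos : ∀ n, 0 ≤ A n)
    (hAsum : ∀ h : H, HasSum (fun n => A n h) h)
    (P : ℕ → H →L[ℂ] H)
    (hPidem : ∀ k, IsIdempotentElem (P k))
    (hPsa : ∀ k, IsSelfAdjoint (P k))
    (hPrange : ∀ k, LinearMap.range (P k : H →ₗ[ℂ] H) = ⨅ j ∈ Finset.range k, LinearMap.ker (A j : H →ₗ[ℂ] H))
    (B : ℕ → H →L[ℂ] H)
    (hB : ∀ k, B k = P k * A k * P k) :
    ∀ x : H, (∀ k, B k x = 0) → x = 0 := by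
  intro x hx
  have hAx : ∀ k, A k x = 0 := by
    intro k
    induction k using Nat.strong_induction_on with
    | _ k ih =>
      have hPx : P k x = x := by
        have hPk := ContinuousLinearMap.isIdempotentElem_toLinearMap_iff.mpr (hPidem k)
        rw [← ContinuousLinearMap.coe_coe, ← LinearMap.IsIdempotentElem.mem_range_iff hPk, hPrange]
        simpa using ih
      exact ContinuousLinearMap.apply_eq_zero_of_conj_apply_eq_zero (hApos k) (hPsa k) hPx
        (hB k ▸ hx k)
  exact HasSum.unique (by simpa only [hAx] using hAsum x) hasSum_zero
end

section
/- Range of the collapse map (sufficiency construction): let (B_k) be pairwise orthogonal positive contractions whose support projections S_k satisfy Σ S_k = I strongly, and define A_1 = B_1 and A_k = B_k + (S_{k-1} - B_{k-1}) for k ≥ 2. Then each A_k is positive, Σ_{k=1}^N A_k = Σ_{k=1}^{N-1} S_k + B_N for N ≥ 2, and Σ_{k≥1} A_k = I strongly, so (A_k) is an ordered POVM. -/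
open ContinuousLinearMap
open scoped InnerProductSpace

/-!
Positivity of `A (k+1) = B (k+1) + (S k - B k)` is the inequality `B k ≤ S k`, which holds because
`S k - B k = S k (1 - B k) S k`. The partial sums telescope. For the strong sum, `Σ_k A k h` splits
into the shifted series `Σ_k B k h` and `Σ_k (S k h - B k h)`, so it suffices that `Σ_k B k h`
converges unconditionally; this holds because the vectors `B k h` lie in the mutually orthogonal
ranges of the `S k` and are dominated in norm by the summable `S k h`.
-/

theorem hasSum_of_succ_eq_add_sub {G : Type*} [AddCommGroup G] [TopologicalSpace G]
    [IsTopologicalAddGroup G] {a b s : ℕ → G} {x : G} (hs : HasSum s x) (hb : Summable b)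
    (h0 : a 0 = b 0) (hsucc : ∀ k, a (k + 1) = b (k + 1) + (s k - b k)) : HasSum a x := by
  obtain ⟨y, hy⟩ := hb
  have hshift : HasSum (fun k => b (k + 1)) (y - b 0) := by
    simpa using (hasSum_nat_add_iff' 1).mpr hy
  rw [← hasSum_nat_add_iff' 1]
  simpa only [hsucc, Finset.sum_range_one, h0, add_sub_cancel, sub_add_sub_cancel'] using
    hshift.add (hs.sub hy)

theorem IsSelfAdjoint.mul_rev_eq {R : Type*} [Mul R] [StarMul R] {a b c : R}
    (ha : IsSelfAdjoint a) (hb : IsSelfAdjoint b) (hc : IsSelfAdjoint c) (h : a * b = c) :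
    b * a = c := by
  simpa [ha.star_eq, hb.star_eq, hc.star_eq] using congr(star $h)

theorem IsStarProjection.le_of_mul_eq {R : Type*} [Ring R] [PartialOrder R] [StarRing R]
    [StarOrderedRing R] {S B : R} (hS : IsStarProjection S) (hB : B ≤ 1) (hSB : S * B = B) :
    B ≤ S := by
  have hBsa : IsSelfAdjoint B := by
    simpa using (IsSelfAdjoint.one R).sub (IsSelfAdjoint.of_nonneg (sub_nonneg.mpr hB))
  have hBS : B * S = B := hS.isSelfAdjoint.mul_rev_eq hBsa hBsa hSB
  have hconj : S - B = star S * (1 - B) * S := by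
    rw [hS.isSelfAdjoint.star_eq, mul_sub, mul_one, sub_mul, hS.isIdempotentElem.eq, hSB, hBS]
  rw [← sub_nonneg, hconj]
  exact star_left_conjugate_nonneg (sub_nonneg.mpr hB) S

namespace ContinuousLinearMap

section Topological

variable {R M : Type*} [Ring R] [TopologicalSpace M] [AddCommGroup M] [Module R M]

theorem mul_eq_self_of_range_le {S B : M →L[R] M} (hS : IsIdempotentElem S)
    (h : LinearMap.range (B : M →ₗ[R] M) ≤ LinearMap.range (S : M →ₗ[R] M)) : S * B = B := by
  ext x
  obtain ⟨y, hy : S y = B x⟩ := h ⟨x, rfl⟩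
  change S (B x) = B x
  rw [← hy]
  exact congr($hS y)

variable [IsTopologicalAddGroup M] [ContinuousConstSMul R M] [T1Space M]

theorem mul_eq_zero_of_range_le_topologicalClosure {B C S : M →L[R] M} (hBC : B * C = 0)
    (hS : LinearMap.range (S : M →ₗ[R] M) ≤ (LinearMap.range (C : M →ₗ[R] M)).topologicalClosure) :
    B * S = 0 := by
  have hker : LinearMap.range (C : M →ₗ[R] M) ≤ LinearMap.ker (B : M →ₗ[R] M) := by
    rintro _ ⟨x, rfl⟩
    simpa using congr($hBC x)
  ext x
  exact (Submodule.topologicalClosure_minimal _ hker B.isClosed_ker) (hS ⟨x, rfl⟩)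

end Topological

theorem norm_apply_le_of_mul_eq {𝕜 E : Type*} [NontriviallyNormedField 𝕜] [NormedAddCommGroup E]
    [NormedSpace 𝕜 E] {B S : E →L[𝕜] E} (hB : ‖B‖ ≤ 1) (hBS : B * S = B) (x : E) :
    ‖B x‖ ≤ ‖S x‖ := calc
  ‖B x‖ = ‖B (S x)‖ := by rw [← comp_apply, ← mul_def, hBS]
  _ ≤ 1 * ‖S x‖ := B.le_of_opNorm_le hB _
  _ = ‖S x‖ := one_mul _

section Hilbert

variable {𝕜 E : Type*} [RCLike 𝕜] [NormedAddCommGroup E] [InnerProductSpace 𝕜 E] [CompleteSpace E]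

theorem mul_eq_zero_of_supports {S S' B B' : E →L[𝕜] E} (hS : IsSelfAdjoint S)
    (hB' : IsSelfAdjoint B') (hB'B : B' * B = 0)
    (hSB : LinearMap.range (S : E →ₗ[𝕜] E) ≤ (LinearMap.range (B : E →ₗ[𝕜] E)).topologicalClosure)
    (hS'B' :
      LinearMap.range (S' : E →ₗ[𝕜] E) ≤ (LinearMap.range (B' : E →ₗ[𝕜] E)).topologicalClosure) :
    S * S' = 0 :=
  mul_eq_zero_of_range_le_topologicalClosure
    (hB'.mul_rev_eq hS (.zero _) (mul_eq_zero_of_range_le_topologicalClosure hB'B hSB)) hS'B'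

theorem orthogonalFamily_range_of_mul_eq_zero {ι : Type*} {S : ι → E →L[𝕜] E}
    (hS : ∀ i, IsSelfAdjoint (S i)) (h : Pairwise fun i j => S i * S j = 0) :
    OrthogonalFamily 𝕜 (fun i => LinearMap.range (S i : E →ₗ[𝕜] E))
      (fun i => (LinearMap.range (S i : E →ₗ[𝕜] E)).subtypeₗᵢ) := by
  rintro i j hij ⟨_, a, rfl⟩ ⟨_, b, rfl⟩
  change ⟪S i a, S j b⟫_𝕜 = 0
  rw [← (hS i).adjoint_eq, adjoint_inner_left, ← comp_apply, ← mul_def, h hij, zero_apply,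
    inner_zero_right]

end Hilbert

end ContinuousLinearMap

theorem OrthogonalFamily.summable_of_norm_le {𝕜 E ι : Type*} [RCLike 𝕜] [NormedAddCommGroup E]
    [InnerProductSpace 𝕜 E] [CompleteSpace E] {G : ι → Type*} [∀ i, NormedAddCommGroup (G i)]
    [∀ i, InnerProductSpace 𝕜 (G i)] {V : ∀ i, G i →ₗᵢ[𝕜] E} (hV : OrthogonalFamily 𝕜 G V)
    {f g : ∀ i, G i} (hg : Summable fun i => V i (g i)) (hfg : ∀ i, ‖f i‖ ≤ ‖g i‖) :
    Summable fun i => V i (f i) := by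
  rw [hV.summable_iff_norm_sq_summable] at hg ⊢
  exact hg.of_nonneg_of_le (fun i => by positivity) fun i => by gcongr; exact hfg i

theorem collapse_range_construction
    {H : Type*} [NormedAddCommGroup H] [InnerProductSpace ℂ H] [CompleteSpace H]
    (B : ℕ → H →L[ℂ] H)
    (hBpos : ∀ k, 0 ≤ B k) (hBcontr : ∀ k, B k ≤ 1)
    (hBorth : ∀ i j, i ≠ j → B i * B j = 0)
    (S : ℕ → H →L[ℂ] H)
    (hSidem : ∀ k, IsIdempotentElem (S k))
    (hSsa : ∀ k, IsSelfAdjoint (S k))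
    (hSrange : ∀ k, LinearMap.range (S k : H →ₗ[ℂ] H) = (LinearMap.range (B k : H →ₗ[ℂ] H)).topologicalClosure)
    (hSsum : ∀ h : H, HasSum (fun k => S k h) h)
    (A : ℕ → H →L[ℂ] H)
    (hA0 : A 0 = B 0)
    (hAk : ∀ k, A (k + 1) = B (k + 1) + (S k - B k)) :
    (∀ k, 0 ≤ A k) ∧
    (∀ N : ℕ, ∑ k ∈ Finset.range (N + 1), A k = (∑ k ∈ Finset.range N, S k) + B N) ∧
    (∀ h : H, HasSum (fun k => A k h) h) := by
  have hBsa k : IsSelfAdjoint (B k) := .of_nonneg (hBpos k)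
  have hSB k : S k * B k = B k :=
    mul_eq_self_of_range_le (hSidem k) (hSrange k ▸ Submodule.le_topologicalClosure _)
  have hSS : Pairwise fun i j => S i * S j = 0 := fun i j hij =>
    mul_eq_zero_of_supports (hSsa i) (hBsa j) (hBorth j i hij.symm) (hSrange i).le (hSrange j).le
  refine ⟨fun k => ?_, fun N => ?_, fun h => ?_⟩
  · cases k with
    | zero => exact hA0 ▸ hBpos 0
    | succ k =>
      exact hAk k ▸ add_nonneg (hBpos _)
        (sub_nonneg.mpr (IsStarProjection.le_of_mul_eq ⟨hSidem k, hSsa k⟩ (hBcontr k) (hSB k)))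
  · induction N with
    | zero => simp [hA0]
    | succ N ih =>
      rw [Finset.sum_range_succ, ih, hAk, Finset.sum_range_succ]
      abel
  · have hle k : ‖B k h‖ ≤ ‖S k h‖ :=
      norm_apply_le_of_mul_eq ((CStarAlgebra.norm_le_one_iff_of_nonneg _ (hBpos k)).mpr (hBcontr k))
        ((hSsa k).mul_rev_eq (hBsa k) (hBsa k) (hSB k)) h
    have hBh : Summable fun k => B k h :=
      (orthogonalFamily_range_of_mul_eq_zero hSsa hSS).summable_of_norm_le
        (f := fun k => ⟨B k h, B k h, congr($(hSB k) h)⟩) (g := fun k => ⟨S k h, h, rfl⟩)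
        (hSsum h).summable hle
    exact hasSum_of_succ_eq_add_sub (hSsum h) hBh (by rw [hA0]) fun k => by rw [hAk]; rfl
end

section
/- For the ordered POVM A_1 = B_1, A_k = B_k + (S_{k-1} - B_{k-1}) built from a collapsed family, the ordered kernel filtration satisfies ∩_{j<k} ker A_j = (Σ_{j<k} S_j H)^⊥ for every k, and consequently P_{k-1} A_k P_{k-1} = B_k, i.e. the collapse of (A_k) recovers (B_k). -/
/-!
A vector killed by `B 0, …, B (k-1)` is also killed by `S (k-1)`, because
`ker S j = (range S j)ᗮ = (range B j)ᗮ = ker B j`; on such vectors `A k` therefore acts as `B k`,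
and induction on `k` shows that `A` and `B` have the same kernel filtration. Orthogonality of the
`B j` puts `range (B k)` inside its `k`-th level, so a projection `P` onto that level satisfies
`P * B k = B k = B k * P`, whence `P * A k * P = P * B k * P = B k`.
-/

open ContinuousLinearMap Submodule

section

variable {𝕜 H : Type*} [RCLike 𝕜] [NormedAddCommGroup H] [InnerProductSpace 𝕜 H]

theorem IsIdempotentElem.mul_eq_right_of_range_le {P T : H →L[𝕜] H} (hP : IsIdempotentElem P)
    (h : LinearMap.range (T : H →ₗ[𝕜] H) ≤ LinearMap.range (P : H →ₗ[𝕜] H)) : P * T = T := by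
  ext x
  obtain ⟨y, hy⟩ := h ⟨x, rfl⟩
  simp only [coe_coe] at hy
  change P (T x) = T x
  rw [← hy]
  exact congrArg (· y) hP.eq

abbrev kerFiltration (T : ℕ → H →L[𝕜] H) (k : ℕ) : Submodule 𝕜 H :=
  ⨅ j ∈ Finset.range k, LinearMap.ker (T j : H →ₗ[𝕜] H)

theorem mem_kerFiltration {T : ℕ → H →L[𝕜] H} {k : ℕ} {x : H} :
    x ∈ kerFiltration T k ↔ ∀ j < k, T j x = 0 := by
  simp [kerFiltration]

theorem mem_kerFiltration_succ {T : ℕ → H →L[𝕜] H} {k : ℕ} {x : H} :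
    x ∈ kerFiltration T (k + 1) ↔ x ∈ kerFiltration T k ∧ T k x = 0 := by
  simp only [mem_kerFiltration, Nat.forall_lt_succ_right]

namespace OrderedPOVM

variable {A B S : ℕ → H →L[𝕜] H} (hker : ∀ j x, B j x = 0 → S j x = 0) (hA0 : A 0 = B 0)
  (hAk : ∀ k, A (k + 1) = B (k + 1) + (S k - B k))
include hker hA0 hAk

theorem apply_eq_of_mem_kerFiltration {k : ℕ} {x : H} (hx : x ∈ kerFiltration B k) :
    A k x = B k x := by
  cases k with
  | zero => rw [hA0]
  | succ k =>
    have hBk : B k x = 0 := (mem_kerFiltration_succ.mp hx).2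
    simp [hAk, hBk, hker k x hBk]

theorem kerFiltration_eq (k : ℕ) : kerFiltration A k = kerFiltration B k := by
  ext x
  induction k with
  | zero => simp
  | succ k ih =>
    rw [mem_kerFiltration_succ, mem_kerFiltration_succ, ih]
    exact and_congr_right fun hx => by rw [apply_eq_of_mem_kerFiltration hker hA0 hAk hx]

end OrderedPOVM

variable [CompleteSpace H]

theorem IsSelfAdjoint.ker_eq_orthogonal_range {T : H →L[𝕜] H} (hT : IsSelfAdjoint T) :
    LinearMap.ker (T : H →ₗ[𝕜] H) = (LinearMap.range (T : H →ₗ[𝕜] H))ᗮ := by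
  have h := T.orthogonal_range
  rw [hT.adjoint_eq] at h
  exact h.symm

theorem IsSelfAdjoint.ker_eq_ker_of_range_eq_closure {S T : H →L[𝕜] H}
    (hS : IsSelfAdjoint S) (hT : IsSelfAdjoint T)
    (h : LinearMap.range (S : H →ₗ[𝕜] H) = (LinearMap.range (T : H →ₗ[𝕜] H)).topologicalClosure) :
    LinearMap.ker (S : H →ₗ[𝕜] H) = LinearMap.ker (T : H →ₗ[𝕜] H) := by
  rw [hS.ker_eq_orthogonal_range, hT.ker_eq_orthogonal_range, h, orthogonal_closure]

theorem IsSelfAdjoint.mul_eq_left_of_range_le {P T : H →L[𝕜] H} (hT : IsSelfAdjoint T)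
    (hP : IsIdempotentElem P) (hPsa : IsSelfAdjoint P)
    (h : LinearMap.range (T : H →ₗ[𝕜] H) ≤ LinearMap.range (P : H →ₗ[𝕜] H)) : T * P = T := by
  simpa only [star_mul, hPsa.star_eq, hT.star_eq] using congrArg star (hP.mul_eq_right_of_range_le h)

theorem kerFiltration_eq_orthogonal_iSup_range {T : ℕ → H →L[𝕜] H}
    (hT : ∀ j, IsSelfAdjoint (T j)) (k : ℕ) :
    kerFiltration T k = (⨆ j ∈ Finset.range k, LinearMap.range (T j : H →ₗ[𝕜] H))ᗮ := by
  simp only [kerFiltration, (hT _).ker_eq_orthogonal_range]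
  exact (orthogonal_gc 𝕜 H).l_iSup₂.symm

end

theorem collapse_recovers_collapsed_family_general
    {H : Type*} [NormedAddCommGroup H] [InnerProductSpace ℂ H] [CompleteSpace H]
    (B : ℕ → H →L[ℂ] H)
    (hBpos : ∀ k, 0 ≤ B k)
    (hBorth : ∀ i j, i ≠ j → B i * B j = 0)
    (S : ℕ → H →L[ℂ] H)
    (hSsa : ∀ k, IsSelfAdjoint (S k))
    (hSrange : ∀ k, LinearMap.range (S k : H →ₗ[ℂ] H) = (LinearMap.range (B k : H →ₗ[ℂ] H)).topologicalClosure)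
    (A : ℕ → H →L[ℂ] H)
    (hA0 : A 0 = B 0)
    (hAk : ∀ k, A (k + 1) = B (k + 1) + (S k - B k)) :
    (∀ k : ℕ, (⨅ j ∈ Finset.range k, LinearMap.ker (A j : H →ₗ[ℂ] H)) =
        (⨆ j ∈ Finset.range k, LinearMap.range (S j : H →ₗ[ℂ] H))ᗮ) ∧
    (∀ k : ℕ, ∀ Pk : H →L[ℂ] H, IsIdempotentElem Pk → IsSelfAdjoint Pk →
      LinearMap.range (Pk : H →ₗ[ℂ] H) = (⨅ j ∈ Finset.range k, LinearMap.ker (A j : H →ₗ[ℂ] H)) →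
      Pk * A k * Pk = B k) := by
  have hBsa k : IsSelfAdjoint (B k) := (hBpos k).isSelfAdjoint
  have hker k : LinearMap.ker (S k : H →ₗ[ℂ] H) = LinearMap.ker (B k : H →ₗ[ℂ] H) :=
    (hSsa k).ker_eq_ker_of_range_eq_closure (hBsa k) (hSrange k)
  have hBS j x (hx : B j x = 0) : S j x = 0 := (hker j).ge hx
  have hAB : ∀ k, kerFiltration A k = kerFiltration B k := OrderedPOVM.kerFiltration_eq hBS hA0 hAk
  have hAS k : kerFiltration A k = kerFiltration S k := by
    simp only [hAB, kerFiltration, hker]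
  refine ⟨fun k => (hAS k).trans (kerFiltration_eq_orthogonal_iSup_range hSsa k), ?_⟩
  intro k P hP hPsa hPrange
  have hPrangeB : LinearMap.range (P : H →ₗ[ℂ] H) = kerFiltration B k :=
    hPrange.trans (hAB k)
  have hBrange : LinearMap.range (B k : H →ₗ[ℂ] H) ≤ LinearMap.range (P : H →ₗ[ℂ] H) := by
    rintro _ ⟨x, rfl⟩
    rw [hPrangeB, mem_kerFiltration]
    intro j hj
    exact congrArg (· x) (hBorth j k hj.ne)
  have hAP : A k * P = B k * P := by
    ext x
    exact OrderedPOVM.apply_eq_of_mem_kerFiltration hBS hA0 hAk (hPrangeB ▸ ⟨x, rfl⟩)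
  rw [mul_assoc, hAP, (hBsa k).mul_eq_left_of_range_le hP hPsa hBrange,
    hP.mul_eq_right_of_range_le hBrange]

theorem collapse_recovers_collapsed_family
    {H : Type*} [NormedAddCommGroup H] [InnerProductSpace ℂ H] [CompleteSpace H]
    (B : ℕ → H →L[ℂ] H)
    (hBpos : ∀ k, 0 ≤ B k) (hBcontr : ∀ k, B k ≤ 1)
    (hBorth : ∀ i j, i ≠ j → B i * B j = 0)
    (S : ℕ → H →L[ℂ] H)
    (hSidem : ∀ k, IsIdempotentElem (S k))
    (hSsa : ∀ k, IsSelfAdjoint (S k))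
    (hSrange : ∀ k, LinearMap.range (S k : H →ₗ[ℂ] H) = (LinearMap.range (B k : H →ₗ[ℂ] H)).topologicalClosure)
    (hSsum : ∀ h : H, HasSum (fun k => S k h) h)
    (A : ℕ → H →L[ℂ] H)
    (hA0 : A 0 = B 0)
    (hAk : ∀ k, A (k + 1) = B (k + 1) + (S k - B k)) :
    (∀ k : ℕ, (⨅ j ∈ Finset.range k, LinearMap.ker (A j : H →ₗ[ℂ] H)) =
        (⨆ j ∈ Finset.range k, LinearMap.range (S j : H →ₗ[ℂ] H))ᗮ) ∧
    (∀ k : ℕ, ∀ Pk : H →L[ℂ] H, IsIdempotentElem Pk → IsSelfAdjoint Pk →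
      LinearMap.range (Pk : H →ₗ[ℂ] H) = (⨅ j ∈ Finset.range k, LinearMap.ker (A j : H →ₗ[ℂ] H)) →
      Pk * A k * Pk = B k) :=
  collapse_recovers_collapsed_family_general B hBpos hBorth S hSsa hSrange A hA0 hAk
end

section
/- For the residual allocation polynomials p_{m,j}, one has p_{m,1}(t) = t^{m+1} for all m ≥ 0, and p_{m,2}(t) = t^m ∏_{ℓ=1}^{m}(1 - t^ℓ) for all m ≥ 1. -/
/-- The residual allocation polynomials `p_{m,j}` (1-based in `j`):
`p 0 1 t = t`; `p (m+1) j t = t * ∏_{1≤ℓ<j} (1 - p m ℓ t) * p m j t` for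
`1 ≤ j ≤ m+1`; `p (m+1) (m+2) t = t * ∏_{ℓ=1}^{m+1} (1 - p m ℓ t)`;
`p m j t = 0` for `j` out of range. -/
noncomputable def presid : ℕ → ℕ → ℝ → ℝ
  | 0, j, t => if j = 1 then t else 0
  | (m + 1), j, t =>
      if j = m + 2 then t * ∏ l ∈ Finset.Icc 1 (m + 1), (1 - presid m l t)
      else if 1 ≤ j ∧ j ≤ m + 1 then
        t * (∏ l ∈ Finset.Ico 1 j, (1 - presid m l t)) * presid m j t
      else 0

/- The first coordinate only ever picks up a factor `t`, and the second picks up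
`t * (1 - p_{m,1}) = t * (1 - t^{m+1})`; the new coordinate `j = m + 2` enters only
for `m = 0`, giving `p_{1,2} = t (1 - t)`. -/

theorem presid_succ_of_le {m j : ℕ} (hj₁ : 1 ≤ j) (hj : j ≤ m + 1) (t : ℝ) :
    presid (m + 1) j t = t * (∏ l ∈ Finset.Ico 1 j, (1 - presid m l t)) * presid m j t := by
  rw [presid, if_neg (by omega), if_pos ⟨hj₁, hj⟩]

theorem presid_one_two (t : ℝ) : presid 1 2 t = t * (1 - t) := by
  simp [presid]

theorem presid_one (m : ℕ) (t : ℝ) : presid m 1 t = t ^ (m + 1) := by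
  induction m with
  | zero => simp [presid]
  | succ m ih =>
    rw [presid_succ_of_le le_rfl (by omega), ih]
    simp [pow_succ, mul_comm]

theorem presid_two {m : ℕ} (hm : 1 ≤ m) (t : ℝ) :
    presid m 2 t = t ^ m * ∏ l ∈ Finset.Icc 1 m, (1 - t ^ l) := by
  induction m, hm using Nat.le_induction with
  | base => simp [presid_one_two]
  | succ m hm ih =>
    rw [presid_succ_of_le (by omega) (by omega), Nat.Ico_succ_singleton,
      Finset.prod_singleton, presid_one, ih, Finset.prod_Icc_succ_top (by omega)]
    ring

theorem presid_first_two_closed_forms_general (t : ℝ) :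
    (∀ m : ℕ, presid m 1 t = t ^ (m + 1)) ∧
    (∀ m : ℕ, 1 ≤ m → presid m 2 t = t ^ m * ∏ l ∈ Finset.Icc 1 m, (1 - t ^ l)) :=
  ⟨fun m => presid_one m t, fun _ hm => presid_two hm t⟩

theorem presid_first_two_closed_forms (t : ℝ) (ht : t ∈ Set.Icc (0 : ℝ) 1) :
    (∀ m : ℕ, presid m 1 t = t ^ (m + 1)) ∧
    (∀ m : ℕ, 1 ≤ m → presid m 2 t = t ^ m * ∏ l ∈ Finset.Icc 1 m, (1 - t ^ l)) :=
  presid_first_two_closed_forms_general t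
end
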